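/- Let λ ∈ ℂ with |λ| = 1, let k < l be positive integers, and let γ = diag(J(λ,k), J(λ,l)) be the (k+l)×(k+l) block-diagonal matrix. Then (1 / C(m, l-1)) · γ^m converges entrywise as m → ∞ to a matrix whose only nonzero entry is in position (k+1, k+l) and has modulus 1 in the limit (more precisely, all other entries tend to 0 and the (k+1, k+l)-entry has modulus tending to 1). -/

import Mathlib

/-!
`J(λ)^m` has `(i, j)`-entry `C(m, j - i) λ^(m - (j - i))` for `i ≤ j` and `0` otherwise, by
Pascal's rule, and `γ^m` is block diagonal with blocks `J(λ, k)^m` and `J(λ, l)^m`. Since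
`C(m, d) = Θ(m^d)`, dividing by `C(m, l - 1)` kills every entry with `j - i < l - 1`, and the
only entry with `j - i = l - 1` is the corner of the larger block, of modulus `C(m, l - 1)`.
-/

open Filter Topology

/-- The `k × k` upper-triangular Jordan block with eigenvalue `lam`. -/
def jordanBlock (lam : ℂ) (k : ℕ) : Matrix (Fin k) (Fin k) ℂ :=
  fun i j => if (j : ℕ) = (i : ℕ) then lam
    else if (j : ℕ) = (i : ℕ) + 1 then 1 else 0

open Asymptotics

/-- Indices are natural numbers, so that the formula does not depend on the size of the block.
The truncated exponent `m - (b - a)` is harmless: its coefficient vanishes when `b - a > m`. -/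
def jordanPowEntry (lam : ℂ) (m a b : ℕ) : ℂ :=
  if a ≤ b then (m.choose (b - a) : ℂ) * lam ^ (m - (b - a)) else 0

lemma jordanPowEntry_zero (lam : ℂ) (a b : ℕ) :
    jordanPowEntry lam 0 a b = if a = b then 1 else 0 := by
  unfold jordanPowEntry
  rcases lt_trichotomy a b with h | rfl | h
  · simp [h.ne, h.le, Nat.choose_eq_zero_of_lt (by omega : 0 < b - a)]
  · simp
  · simp [h.ne', h.not_ge]

lemma jordanPowEntry_succ (lam : ℂ) (m a b : ℕ) :
    jordanPowEntry lam (m + 1) a b =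
      lam * jordanPowEntry lam m a b + jordanPowEntry lam m (a + 1) b := by
  unfold jordanPowEntry
  rcases lt_trichotomy a b with h | rfl | h
  · obtain ⟨d, rfl⟩ : ∃ d, b = a + d + 1 := ⟨b - a - 1, by omega⟩
    rw [if_pos (by omega), if_pos (by omega), if_pos (by omega),
      show a + d + 1 - a = d + 1 by omega, show a + d + 1 - (a + 1) = d by omega,
      Nat.choose_succ_succ', Nat.cast_add]
    rcases lt_or_ge d m with hdm | hdm
    · rw [show m + 1 - (d + 1) = m - (d + 1) + 1 by omega, show m - d = m - (d + 1) + 1 by omega]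
      ring
    · rw [Nat.choose_eq_zero_of_lt (by omega : m < d + 1), show m + 1 - (d + 1) = m - d by omega]
      ring
  · simp [pow_succ']
  · simp [show ¬ a ≤ b by omega, show ¬ a + 1 ≤ b by omega]

theorem jordanBlock_pow_apply (lam : ℂ) (k m : ℕ) (i j : Fin k) :
    (jordanBlock lam k ^ m) i j = jordanPowEntry lam m i j := by
  induction m generalizing i with
  | zero => simp only [pow_zero, Matrix.one_apply, jordanPowEntry_zero, Fin.ext_iff]
  | succ m ih =>
    rw [pow_succ', Matrix.mul_apply]
    simp only [ih]
    unfold jordanBlock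
    rw [Fin.sum_univ_eq_sum_range (fun r => (if r = (i : ℕ) then lam
      else if r = (i : ℕ) + 1 then 1 else 0) * jordanPowEntry lam m r j) k]
    have row : ∀ r, (if r = (i : ℕ) then lam else if r = (i : ℕ) + 1 then 1 else 0) *
          jordanPowEntry lam m r j =
        (if (i : ℕ) = r then lam * jordanPowEntry lam m i j else 0) +
          (if (i : ℕ) + 1 = r then jordanPowEntry lam m (i + 1) j else 0) := by
      intro r
      split_ifs <;> first | omega | subst_vars; simp
    simp only [row, Finset.sum_add_distrib, Finset.sum_ite_eq, Finset.mem_range, i.isLt, if_true,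
      jordanPowEntry_succ]
    split_ifs with h
    · rfl
    · simp [jordanPowEntry, show ¬ (i : ℕ) + 1 ≤ j by omega]

lemma isLittleO_choose_choose {d e : ℕ} (h : d < e) :
    (fun m : ℕ => (m.choose d : ℝ)) =o[atTop] (fun m => (m.choose e : ℝ)) :=
  (isTheta_choose d).isBigO.trans_isLittleO
    (((isLittleO_pow_pow_atTop_of_lt h).comp_tendsto tendsto_natCast_atTop_atTop).trans_isBigO
      (isTheta_choose e).isBigO_symm)

lemma norm_jordanPowEntry_le {lam : ℂ} (hlam : ‖lam‖ ≤ 1) (m a b : ℕ) :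
    ‖jordanPowEntry lam m a b‖ ≤ m.choose (b - a) := by
  unfold jordanPowEntry
  split_ifs
  · rw [norm_mul, norm_pow, Complex.norm_natCast]
    exact mul_le_of_le_one_right (Nat.cast_nonneg _) (pow_le_one₀ (norm_nonneg _) hlam)
  · simp

lemma norm_jordanPowEntry {lam : ℂ} (hlam : ‖lam‖ = 1) {a b : ℕ} (h : a ≤ b) (m : ℕ) :
    ‖jordanPowEntry lam m a b‖ = m.choose (b - a) := by
  simp [jordanPowEntry, h, hlam]

lemma tendsto_jordanPowEntry_div_choose {lam : ℂ} (hlam : ‖lam‖ ≤ 1) {a b e : ℕ}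
    (h : b - a < e) :
    Tendsto (fun m : ℕ => (1 / (m.choose e : ℂ)) * jordanPowEntry lam m a b) atTop (𝓝 0) := by
  have hbound : (fun m => jordanPowEntry lam m a b) =O[atTop]
      (fun m => (m.choose (b - a) : ℝ)) :=
    IsBigO.of_bound 1 (Eventually.of_forall fun m => by
      simpa using norm_jordanPowEntry_le hlam m a b)
  have hsmall : (fun m => jordanPowEntry lam m a b) =o[atTop] (fun m => (m.choose e : ℂ)) := by
    rw [← isLittleO_norm_right]
    simpa using hbound.trans_isLittleO (isLittleO_choose_choose h)
  simpa [div_eq_inv_mul] using hsmall.tendsto_div_nhds_zero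

lemma tendsto_norm_jordanPowEntry_div_choose {lam : ℂ} (hlam : ‖lam‖ = 1) {a b e : ℕ}
    (h : a + e = b) :
    Tendsto (fun m : ℕ => ‖(1 / (m.choose e : ℂ)) * jordanPowEntry lam m a b‖) atTop (𝓝 1) := by
  refine tendsto_const_nhds.congr' ?_
  filter_upwards [eventually_ge_atTop e] with m hm
  rw [norm_mul, norm_jordanPowEntry hlam (by omega), show b - a = e by omega, norm_div, norm_one,
    Complex.norm_natCast, one_div_mul_cancel (by exact_mod_cast (Nat.choose_pos hm).ne')]

/-- for `γ = diag(J(λ,k), J(λ,l))` with `|λ| = 1` and `k < l`,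
in `(1 / C(m, l-1)) γ^m` all entries except the one in position `(k+1, k+l)`
tend to `0`, while that entry has modulus tending to `1`. -/
theorem parabolic_two_blocks_normalized_pow (lam : ℂ)
    (hlam : ‖lam‖ = 1) (k l : ℕ) (hkl : k < l)
    (γ : Matrix (Fin k ⊕ Fin l) (Fin k ⊕ Fin l) ℂ)
    (hγ : γ = Matrix.fromBlocks (jordanBlock lam k) 0 0 (jordanBlock lam l)) :
    (∀ p q : Fin k ⊕ Fin l,
      (p, q) ≠ (Sum.inr ⟨0, by omega⟩, Sum.inr ⟨l - 1, by omega⟩) →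
      Tendsto (fun m : ℕ => (1 / (m.choose (l - 1) : ℂ)) * ((γ ^ m) p q))
        atTop (𝓝 0)) ∧
    Tendsto (fun m : ℕ =>
        ‖(1 / (m.choose (l - 1) : ℂ)) *
          ((γ ^ m) (Sum.inr ⟨0, by omega⟩) (Sum.inr ⟨l - 1, by omega⟩))‖)
      atTop (𝓝 1) := by
  subst hγ
  simp only [Matrix.fromBlocks_diagonal_pow]
  refine ⟨?_, ?_⟩
  · rintro (i | i) (j | j) hij
    · simp only [Matrix.fromBlocks_apply₁₁, jordanBlock_pow_apply]
      exact tendsto_jordanPowEntry_div_choose hlam.le (by omega)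
    · simp
    · simp
    · have hcorner : ¬ ((i : ℕ) = 0 ∧ (j : ℕ) = l - 1) := by
        rintro ⟨hi, hj⟩
        exact hij (by simp [Fin.ext_iff, hi, hj])
      simp only [Matrix.fromBlocks_apply₂₂, jordanBlock_pow_apply]
      exact tendsto_jordanPowEntry_div_choose hlam.le (by omega)
  · simp only [Matrix.fromBlocks_apply₂₂, jordanBlock_pow_apply]
    exact tendsto_norm_jordanPowEntry_div_choose hlam (by simp)
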